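/- Let Q be real symmetric block-partitioned with λ_min(Q[i][i]) > Σ_{j≠i}‖Q[i][j]‖_2 =: condition defining δ_i(Q) = λ_min(Q[i][i]) - Σ_{j≠i}‖Q[i][j]‖_2 > 0 for all i, and let A be block-diagonal with A[i][i] = α_i I, α_i > 0. If α_i ≤ (√ε/(1-√ε)) δ_i(Q) for all i ∈ [N], where ε ∈ (0,1), then every eigenvalue of A⁻¹Q is at least (1-√ε)/√ε. -/

import Mathlib

open Matrix BigOperators Finset

noncomputable def specNorm {𝕜 : Type*} [RCLike 𝕜] {m n : Type*} [Fintype m] [Fintype n]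
    [DecidableEq m] [DecidableEq n] (A : Matrix m n 𝕜) : ℝ :=
  ‖LinearMap.toContinuousLinearMap (Matrix.toEuclideanLin A)‖

noncomputable def minEig {n : Type*} [Fintype n] [DecidableEq n] (A : Matrix n n ℝ) : ℝ :=
  sInf {μ : ℝ | (A - μ • 1).det = 0}

noncomputable def maxEig {n : Type*} [Fintype n] [DecidableEq n] (A : Matrix n n ℝ) : ℝ :=
  sSup {μ : ℝ | (A - μ • 1).det = 0}

def blk {N : ℕ} {d : Fin N → ℕ}
    (B : Matrix ((i : Fin N) × Fin (d i)) ((i : Fin N) × Fin (d i)) ℝ) (i j : Fin N) :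
    Matrix (Fin (d i)) (Fin (d j)) ℝ := fun a b => B ⟨i, a⟩ ⟨j, b⟩

noncomputable def eNorm {k : ℕ} (v : Fin k → ℝ) : ℝ := Real.sqrt (∑ a, v a ^ 2)

noncomputable def blockVecNorm {N : ℕ} {d : Fin N → ℕ}
    (x : ((i : Fin N) × Fin (d i)) → ℝ) : ℝ :=
  ⨆ i, eNorm (fun a => x ⟨i, a⟩)

noncomputable def blockOpNorm {N : ℕ} {d : Fin N → ℕ}
    (B : Matrix ((i : Fin N) × Fin (d i)) ((i : Fin N) × Fin (d i)) ℝ) : ℝ :=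
  sInf {c | 0 ≤ c ∧ ∀ x, blockVecNorm (B.mulVec x) ≤ c * blockVecNorm x}

/-!
If `μ < (1 - √ε) / √ε`, the bound on `α` gives `μ α_i < δ_i` for every block. Block diagonal
dominance yields `x ⬝ Q x ≥ ∑ δ_i ‖x_i‖²`: bound each diagonal block below by its least
eigenvalue and each off-diagonal term by `‖Q_ij‖ ‖x_i‖ ‖x_j‖`, then use `2ab ≤ a² + b²` and the
symmetry `‖Q_ij‖ = ‖Q_ji‖`. Hence `Q - μA` is positive definite, and since
`A⁻¹Q - μ = A⁻¹(Q - μA)`, `μ` is not an eigenvalue of `A⁻¹Q`.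
-/

open scoped Matrix.Norms.L2Operator

section SpecNorm

variable {m n : Type*} [Fintype m] [Fintype n] [DecidableEq m] [DecidableEq n]

lemma specNorm_eq_norm (A : Matrix m n ℝ) : specNorm A = ‖A‖ := rfl

lemma specNorm_nonneg (A : Matrix m n ℝ) : 0 ≤ specNorm A := norm_nonneg _

lemma specNorm_transpose (A : Matrix m n ℝ) : specNorm Aᵀ = specNorm A := by
  simpa [specNorm_eq_norm] using Matrix.l2_opNorm_conjTranspose A

lemma abs_dotProduct_mulVec_le_specNorm (A : Matrix m n ℝ) (x : m → ℝ) (y : n → ℝ) :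
    |x ⬝ᵥ A *ᵥ y| ≤ specNorm A * (‖WithLp.toLp 2 x‖ * ‖WithLp.toLp 2 y‖) := by
  have hinner : x ⬝ᵥ A *ᵥ y = inner ℝ (WithLp.toLp 2 x) (WithLp.toLp 2 (A *ᵥ y)) := by
    simp [EuclideanSpace.inner_eq_star_dotProduct, dotProduct_comm]
  calc |x ⬝ᵥ A *ᵥ y| ≤ ‖WithLp.toLp 2 x‖ * ‖WithLp.toLp 2 (A *ᵥ y)‖ :=
        hinner ▸ abs_real_inner_le_norm _ _
    _ ≤ ‖WithLp.toLp 2 x‖ * (‖A‖ * ‖WithLp.toLp 2 y‖) := by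
        gcongr; exact A.l2_opNorm_mulVec _
    _ = specNorm A * (‖WithLp.toLp 2 x‖ * ‖WithLp.toLp 2 y‖) := by
        rw [specNorm_eq_norm]; ring

end SpecNorm

lemma norm_toLp_sq_eq_dotProduct_self {n : Type*} [Fintype n] (x : n → ℝ) :
    ‖WithLp.toLp 2 x‖ ^ 2 = x ⬝ᵥ x := by
  rw [EuclideanSpace.real_norm_sq_eq]
  simp [dotProduct, sq]

section MinEig

variable {n : Type*} [Fintype n] [DecidableEq n]

lemma setOf_det_sub_smul_one_eq_zero_eq_spectrum {K : Type*} [Field K] (M : Matrix n n K) :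
    {μ : K | (M - μ • 1).det = 0} = spectrum K M := by
  ext μ
  rw [Set.mem_ofPred_eq, spectrum.mem_iff, Matrix.isUnit_iff_isUnit_det, isUnit_iff_ne_zero,
    not_not, Algebra.algebraMap_eq_smul_one, ← neg_sub, det_neg]
  simp

namespace Matrix.IsHermitian

variable {M : Matrix n n ℝ}

lemma minEig_le_eigenvalues (hM : M.IsHermitian) (j : n) : minEig M ≤ hM.eigenvalues j := by
  rw [minEig, setOf_det_sub_smul_one_eq_zero_eq_spectrum, hM.spectrum_real_eq_range_eigenvalues]
  exact csInf_le (Set.finite_range _).bddBelow ⟨j, rfl⟩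

lemma posSemidef_sub_smul_one (hM : M.IsHermitian) {c : ℝ} (hc : ∀ j, c ≤ hM.eigenvalues j) :
    (M - c • 1).PosSemidef := by
  have hdiag : (diagonal fun j => hM.eigenvalues j - c).PosSemidef :=
    posSemidef_diagonal_iff.2 fun j => sub_nonneg.2 (hc j)
  convert hdiag.mul_mul_conjTranspose_same (hM.eigenvectorUnitary : Matrix n n ℝ) using 1
  have hU : (hM.eigenvectorUnitary : Matrix n n ℝ) * (hM.eigenvectorUnitary : Matrix n n ℝ)ᴴ = 1 :=
    Unitary.mul_star_self_of_mem hM.eigenvectorUnitary.2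
  have hshift : (diagonal fun j => hM.eigenvalues j - c)
      = diagonal (RCLike.ofReal ∘ hM.eigenvalues) - c • 1 := by
    ext i j; by_cases h : i = j <;> simp [h]
  conv_lhs => rw [hM.spectral_theorem]
  rw [Unitary.conjStarAlgAut_apply, hshift, mul_sub, sub_mul, Matrix.mul_smul, Matrix.smul_mul,
    Matrix.mul_one, star_eq_conjTranspose, hU]

lemma minEig_mul_dotProduct_self_le (hM : M.IsHermitian) (x : n → ℝ) :
    minEig M * (x ⬝ᵥ x) ≤ x ⬝ᵥ M *ᵥ x := by
  have := (hM.posSemidef_sub_smul_one hM.minEig_le_eigenvalues).dotProduct_mulVec_nonneg x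
  simpa [sub_mulVec, dotProduct_sub, smul_mulVec, dotProduct_smul, sub_nonneg] using this

end Matrix.IsHermitian

end MinEig

lemma sum_sum_erase_mul_mul_le_of_symm {ι : Type*} [Fintype ι] [DecidableEq ι]
    {w : ι → ι → ℝ} (hw_symm : ∀ i j, w i j = w j i) (hw : ∀ i j, 0 ≤ w i j) (t : ι → ℝ) :
    ∑ i, ∑ j ∈ univ.erase i, w i j * (t i * t j)
      ≤ ∑ i, (∑ j ∈ univ.erase i, w i j) * t i ^ 2 := by
  have hswap : ∑ i, ∑ j ∈ univ.erase i, w i j * t j ^ 2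
      = ∑ i, ∑ j ∈ univ.erase i, w i j * t i ^ 2 := by
    rw [Finset.sum_comm' (t' := univ) (s' := fun j => univ.erase j)
      (fun i j => by simp [ne_comm, and_comm])]
    exact sum_congr rfl fun i _ => sum_congr rfl fun j _ => by rw [hw_symm]
  calc ∑ i, ∑ j ∈ univ.erase i, w i j * (t i * t j)
      ≤ ∑ i, ∑ j ∈ univ.erase i, w i j * ((t i ^ 2 + t j ^ 2) / 2) := by
        gcongr with i _ j _
        · exact hw i j
        · linarith [two_mul_le_add_sq (t i) (t j)]
    _ = (∑ i, ∑ j ∈ univ.erase i, w i j * t i ^ 2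
          + ∑ i, ∑ j ∈ univ.erase i, w i j * t j ^ 2) / 2 := by
        simp only [← sum_add_distrib, sum_div]
        exact sum_congr rfl fun i _ => sum_congr rfl fun j _ => by ring
    _ = ∑ i, (∑ j ∈ univ.erase i, w i j) * t i ^ 2 := by
        simp only [hswap, add_self_div_two, sum_mul]

section Blocks

variable {N : ℕ} {d : Fin N → ℕ}

def blkVec (x : ((i : Fin N) × Fin (d i)) → ℝ) (i : Fin N) : Fin (d i) → ℝ :=
  fun a => x ⟨i, a⟩

lemma dotProduct_mulVec_eq_sum_blk
    (B : Matrix ((i : Fin N) × Fin (d i)) ((i : Fin N) × Fin (d i)) ℝ)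
    (x y : ((i : Fin N) × Fin (d i)) → ℝ) :
    x ⬝ᵥ B *ᵥ y = ∑ i, ∑ j, blkVec x i ⬝ᵥ blk B i j *ᵥ blkVec y j := by
  simp only [dotProduct, mulVec, ← univ_sigma_univ, sum_sigma, mul_sum, blk, blkVec]
  exact sum_congr rfl fun i _ => sum_comm

lemma dotProduct_diagonal_mulVec_eq_sum_blk (f : Fin N → ℝ) (x : ((i : Fin N) × Fin (d i)) → ℝ) :
    x ⬝ᵥ diagonal (fun a => f a.1) *ᵥ x = ∑ i, f i * (blkVec x i ⬝ᵥ blkVec x i) := by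
  simp only [dotProduct, mulVec_diagonal, ← univ_sigma_univ, sum_sigma, mul_sum, blkVec]
  exact sum_congr rfl fun i _ => sum_congr rfl fun a _ => by ring

variable {Q : Matrix ((i : Fin N) × Fin (d i)) ((i : Fin N) × Fin (d i)) ℝ}

lemma blk_transpose_of_isSymm (hQ : Q.IsSymm) (i j : Fin N) : (blk Q i j)ᵀ = blk Q j i := by
  ext a b
  exact congr_fun₂ hQ ⟨j, a⟩ ⟨i, b⟩

lemma isHermitian_blk_self_of_isSymm (hQ : Q.IsSymm) (i : Fin N) : (blk Q i i).IsHermitian := by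
  simp [IsHermitian, blk_transpose_of_isSymm hQ]

variable (Q) in
noncomputable def blockMargin (i : Fin N) : ℝ :=
  minEig (blk Q i i) - ∑ j ∈ univ.erase i, specNorm (blk Q i j)

theorem sum_blockMargin_mul_le_dotProduct_mulVec (hQ : Q.IsSymm)
    (x : ((i : Fin N) × Fin (d i)) → ℝ) :
    ∑ i, blockMargin Q i * (blkVec x i ⬝ᵥ blkVec x i) ≤ x ⬝ᵥ Q *ᵥ x := by
  set t : Fin N → ℝ := fun i => ‖WithLp.toLp 2 (blkVec x i)‖
  have ht (i : Fin N) : blkVec x i ⬝ᵥ blkVec x i = t i ^ 2 :=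
    (norm_toLp_sq_eq_dotProduct_self _).symm
  have hdiag (i : Fin N) : minEig (blk Q i i) * t i ^ 2 ≤ blkVec x i ⬝ᵥ blk Q i i *ᵥ blkVec x i :=
    ht i ▸ (isHermitian_blk_self_of_isSymm hQ i).minEig_mul_dotProduct_self_le _
  have hoff (i j : Fin N) : -(specNorm (blk Q i j) * (t i * t j))
      ≤ blkVec x i ⬝ᵥ blk Q i j *ᵥ blkVec x j :=
    neg_le_of_abs_le (abs_dotProduct_mulVec_le_specNorm _ _ _)
  have hweights := sum_sum_erase_mul_mul_le_of_symm
    (w := fun i j => specNorm (blk Q i j))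
    (fun i j => by rw [← blk_transpose_of_isSymm hQ, specNorm_transpose])
    (fun _ _ => specNorm_nonneg _) t
  calc ∑ i, blockMargin Q i * (blkVec x i ⬝ᵥ blkVec x i)
      = ∑ i, minEig (blk Q i i) * t i ^ 2
          - ∑ i, (∑ j ∈ univ.erase i, specNorm (blk Q i j)) * t i ^ 2 := by
        simp only [ht, blockMargin, sub_mul, sum_sub_distrib]
    _ ≤ ∑ i, minEig (blk Q i i) * t i ^ 2
          - ∑ i, ∑ j ∈ univ.erase i, specNorm (blk Q i j) * (t i * t j) := by
        gcongr
    _ = ∑ i, (minEig (blk Q i i) * t i ^ 2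
          + ∑ j ∈ univ.erase i, -(specNorm (blk Q i j) * (t i * t j))) := by
        simp only [sum_neg_distrib, sum_add_distrib, sub_eq_add_neg]
    _ ≤ ∑ i, (blkVec x i ⬝ᵥ blk Q i i *ᵥ blkVec x i
          + ∑ j ∈ univ.erase i, blkVec x i ⬝ᵥ blk Q i j *ᵥ blkVec x j) := by
        gcongr with i _ j _
        exacts [hdiag i, hoff i j]
    _ = x ⬝ᵥ Q *ᵥ x := by
        rw [dotProduct_mulVec_eq_sum_blk]
        exact sum_congr rfl fun i _ =>
          add_sum_erase _ (fun j => blkVec x i ⬝ᵥ blk Q i j *ᵥ blkVec x j) (mem_univ i)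

end Blocks

section Dominance

variable {N : ℕ} {d : Fin N → ℕ}
  {Q : Matrix ((i : Fin N) × Fin (d i)) ((i : Fin N) × Fin (d i)) ℝ}

lemma posSemidef_sub_diagonal_blockMargin (hQ : Q.IsSymm) :
    (Q - diagonal fun a : (i : Fin N) × Fin (d i) => blockMargin Q a.1).PosSemidef := by
  refine .of_dotProduct_mulVec_nonneg ?_ fun x => ?_
  · exact IsHermitian.sub (by simpa [IsHermitian] using hQ.eq) (isHermitian_diagonal _)
  · simpa [sub_mulVec, dotProduct_sub, dotProduct_diagonal_mulVec_eq_sum_blk]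
      using sum_blockMargin_mul_le_dotProduct_mulVec hQ x

lemma posDef_sub_diagonal_of_lt_blockMargin (hQ : Q.IsSymm) {β : Fin N → ℝ}
    (hβ : ∀ i, β i < blockMargin Q i) :
    (Q - diagonal fun a : (i : Fin N) × Fin (d i) => β a.1).PosDef := by
  have hpd : (diagonal fun a : (i : Fin N) × Fin (d i) => blockMargin Q a.1 - β a.1).PosDef :=
    posDef_diagonal_iff.2 fun a => sub_pos.2 (hβ a.1)
  convert PosDef.posSemidef_add (posSemidef_sub_diagonal_blockMargin hQ) hpd using 1
  ext a b
  by_cases h : a = b <;> simp [h]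

end Dominance

lemma det_inv_mul_sub_smul_one {n K : Type*} [Fintype n] [DecidableEq n] [Field K]
    {A : Matrix n n K} (hA : IsUnit A.det) (Q : Matrix n n K) (μ : K) :
    (A⁻¹ * Q - μ • 1).det = A⁻¹.det * (Q - μ • A).det := by
  rw [← det_mul, mul_sub, Matrix.mul_smul, nonsing_inv_mul A hA]

theorem reg_eigenvalue_condition_general {N : ℕ} {d : Fin N → ℕ}
    (Q : Matrix ((i : Fin N) × Fin (d i)) ((i : Fin N) × Fin (d i)) ℝ)
    (hQ : Q.IsSymm)
    (δ : Fin N → ℝ)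
    (hδ : ∀ i, δ i = minEig (blk Q i i) - ∑ j ∈ Finset.univ.erase i, specNorm (blk Q i j))
    (α : Fin N → ℝ) (hα : ∀ i, 0 < α i)
    (ε : ℝ) (hε : ε ∈ Set.Ioo (0 : ℝ) 1)
    (hαle : ∀ i, α i ≤ Real.sqrt ε / (1 - Real.sqrt ε) * δ i) :
    ∀ μ : ℝ, ((Matrix.diagonal (fun a : (i : Fin N) × Fin (d i) => α a.1))⁻¹ * Q
        - μ • 1).det = 0 →
      (1 - Real.sqrt ε) / Real.sqrt ε ≤ μ := by
  intro μ hμ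
  by_contra! hμlt
  have hc : 0 < (1 - √ε) / √ε :=
    div_pos (sub_pos.2 ((Real.sqrt_lt' one_pos).2 (by simpa using hε.2))) (Real.sqrt_pos.2 hε.1)
  have hμα (i : Fin N) : μ * α i < blockMargin Q i :=
    calc μ * α i < (1 - √ε) / √ε * α i := mul_lt_mul_of_pos_right hμlt (hα i)
      _ ≤ δ i := (le_inv_mul_iff₀ hc).1 (by rw [inv_div]; exact hαle i)
      _ = blockMargin Q i := hδ i
  set A := diagonal fun a : (i : Fin N) × Fin (d i) => α a.1
  have hA : IsUnit A.det := by
    simpa [A, det_diagonal, isUnit_iff_ne_zero, prod_ne_zero_iff]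
      using fun a : (i : Fin N) × Fin (d i) => (hα a.1).ne'
  have hQA : (Q - μ • A).PosDef := by
    rw [← diagonal_smul]
    exact posDef_sub_diagonal_of_lt_blockMargin hQ hμα
  rw [det_inv_mul_sub_smul_one hA] at hμ
  exact mul_ne_zero (isUnit_nonsing_inv_det A hA).ne_zero hQA.det_pos.ne' hμ

theorem reg_eigenvalue_condition {N : ℕ} {d : Fin N → ℕ}
    (Q : Matrix ((i : Fin N) × Fin (d i)) ((i : Fin N) × Fin (d i)) ℝ)
    (hQ : Q.IsSymm)
    (δ : Fin N → ℝ)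
    (hδ : ∀ i, δ i = minEig (blk Q i i) - ∑ j ∈ Finset.univ.erase i, specNorm (blk Q i j))
    (hδpos : ∀ i, 0 < δ i)
    (α : Fin N → ℝ) (hα : ∀ i, 0 < α i)
    (ε : ℝ) (hε : ε ∈ Set.Ioo (0 : ℝ) 1)
    (hαle : ∀ i, α i ≤ Real.sqrt ε / (1 - Real.sqrt ε) * δ i) :
    ∀ μ : ℝ, ((Matrix.diagonal (fun a : (i : Fin N) × Fin (d i) => α a.1))⁻¹ * Q
        - μ • 1).det = 0 →
      (1 - Real.sqrt ε) / Real.sqrt ε ≤ μ :=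
  reg_eigenvalue_condition_general Q hQ δ hδ α hα ε hε hαle
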